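/- Let A ∈ ℝ^{m×n} have restricted isometry constant δ_k of order k. Then for all vectors v, w ∈ ℝⁿ with |supp(v) ∪ supp(w)| ≤ k, one has |⟨v, (I − AᵀA)w⟩| ≤ δ_k · ‖v‖₂ · ‖w‖₂. -/

import Mathlib

open Matrix

/-- The Euclidean (ℓ₂) norm of a vector in ℝ^d. -/
noncomputable def l2 {d : ℕ} (v : Fin d → ℝ) : ℝ := Real.sqrt (∑ i, v i ^ 2)

/-- The restricted isometry constant of order `k` of a matrix `A`: the smallest `δ ≥ 0`
such that `(1 - δ)‖x‖² ≤ ‖Ax‖² ≤ (1 + δ)‖x‖²` for all `k`-sparse vectors `x`. -/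
noncomputable def RIC {m n : ℕ} (A : Matrix (Fin m) (Fin n) ℝ) (k : ℕ) : ℝ :=
  sInf {δ : ℝ | 0 ≤ δ ∧ ∀ x : Fin n → ℝ, (Function.support x).ncard ≤ k →
    (1 - δ) * l2 x ^ 2 ≤ l2 (A *ᵥ x) ^ 2 ∧ l2 (A *ᵥ x) ^ 2 ≤ (1 + δ) * l2 x ^ 2}

/-! On the span of `v` and `w` every vector is `k`-sparse, so for any admissible `δ` the
restricted isometry property bounds the quadratic form `x ↦ ⟨x, (I - AᵀA)x⟩ = ‖x‖² - ‖Ax‖²` by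
`δ‖x‖²` there. The compression of the symmetric operator `I - AᵀA` to that span is again
symmetric, and the norm of a symmetric operator is the supremum of its Rayleigh quotients, so the
compression has norm at most `δ`; this bounds the bilinear form by `δ‖v‖‖w‖`. Taking the infimum
over admissible `δ` (there is one, e.g. `‖A‖² + 1`) gives the claim. -/

open scoped RealInnerProductSpace

namespace ContinuousLinearMap

variable {E : Type*} [NormedAddCommGroup E] [InnerProductSpace ℝ E]

theorem abs_inner_le_of_abs_inner_self_le {T : E →L[ℝ] E} (hT : (T : E →ₗ[ℝ] E).IsSymmetric)
    (V : Submodule ℝ E) [V.HasOrthogonalProjection] {δ : ℝ} (hδ : 0 ≤ δ)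
    (hV : ∀ x ∈ V, |⟪T x, x⟫| ≤ δ * ‖x‖ ^ 2) {v w : E} (hv : v ∈ V) (hw : w ∈ V) :
    |⟪v, T w⟫| ≤ δ * ‖v‖ * ‖w‖ := by
  set T' : V →L[ℝ] V := V.orthogonalProjectionOnto ∘L T ∘L V.subtypeL
  have inner_T' (x y : V) : ⟪T' x, y⟫ = ⟪T x, y⟫ :=
    Submodule.inner_orthogonalProjectionOnto_eq_of_mem_right y (T x)
  have hT' : (T' : V →ₗ[ℝ] V).IsSymmetric := fun x y => by
    simp only [coe_coe]
    rw [inner_T', ← coe_coe, hT, coe_coe, real_inner_comm, ← inner_T', real_inner_comm]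
  have hT'_norm : ‖T'‖ ≤ δ := by
    rw [T'.norm_eq_iSup_rayleighQuotient hT']
    refine ciSup_le fun x => ?_
    rw [rayleighQuotient, reApplyInnerSelf_apply, RCLike.re_to_real, inner_T', abs_div, abs_sq]
    exact div_le_of_le_mul₀ (sq_nonneg _) hδ (hV x x.2)
  calc |⟪v, T w⟫| = |⟪T' ⟨w, hw⟩, ⟨v, hv⟩⟫| := by rw [inner_T', real_inner_comm]
    _ ≤ ‖T' ⟨w, hw⟩‖ * ‖v‖ := abs_real_inner_le_norm _ _
    _ ≤ ‖T'‖ * ‖w‖ * ‖v‖ := by gcongr; exact T'.le_opNorm _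
    _ ≤ δ * ‖v‖ * ‖w‖ := by rw [mul_right_comm]; gcongr

end ContinuousLinearMap

open scoped Matrix.Norms.L2Operator

section RestrictedIsometry

variable {m n k : ℕ}

lemma l2_nonneg {d : ℕ} (x : Fin d → ℝ) : 0 ≤ l2 x := Real.sqrt_nonneg _

lemma l2_sq {d : ℕ} (x : Fin d → ℝ) : l2 x ^ 2 = x ⬝ᵥ x := by
  rw [l2, Real.sq_sqrt (Finset.sum_nonneg fun i _ => sq_nonneg (x i))]
  simp only [dotProduct, sq]

lemma l2_ofLp {d : ℕ} (x : EuclideanSpace ℝ (Fin d)) : l2 x.ofLp = ‖x‖ := by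
  simp only [l2, EuclideanSpace.norm_eq, Real.norm_eq_abs, sq_abs]

lemma dotProduct_one_sub_transpose_mul_self_mulVec (A : Matrix (Fin m) (Fin n) ℝ)
    (x : Fin n → ℝ) :
    x ⬝ᵥ (1 - Aᵀ * A) *ᵥ x = l2 x ^ 2 - l2 (A *ᵥ x) ^ 2 := by
  rw [l2_sq, l2_sq, sub_mulVec, one_mulVec, dotProduct_sub, ← mulVec_mulVec, dotProduct_mulVec,
    vecMul_transpose]

def HasRIP (A : Matrix (Fin m) (Fin n) ℝ) (k : ℕ) (δ : ℝ) : Prop :=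
  0 ≤ δ ∧ ∀ x : Fin n → ℝ, (Function.support x).ncard ≤ k →
    (1 - δ) * l2 x ^ 2 ≤ l2 (A *ᵥ x) ^ 2 ∧ l2 (A *ᵥ x) ^ 2 ≤ (1 + δ) * l2 x ^ 2

lemma RIC_eq_sInf (A : Matrix (Fin m) (Fin n) ℝ) (k : ℕ) : RIC A k = sInf {δ | HasRIP A k δ} :=
  rfl

lemma hasRIP_opNorm_sq_add_one (A : Matrix (Fin m) (Fin n) ℝ) (k : ℕ) :
    HasRIP A k (‖A‖ ^ 2 + 1) := by
  refine ⟨by positivity, fun x _ => ⟨?_, ?_⟩⟩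
  · nlinarith [sq_nonneg (l2 (A *ᵥ x)), sq_nonneg (l2 x), sq_nonneg ‖A‖]
  · have h := A.l2_opNorm_mulVec (WithLp.toLp 2 x)
    rw [← l2_ofLp, ← l2_ofLp] at h
    have h0 := l2_nonneg (A *ᵥ x)
    calc l2 (A *ᵥ x) ^ 2 ≤ (‖A‖ * l2 x) ^ 2 := by gcongr; exact h
      _ ≤ (1 + (‖A‖ ^ 2 + 1)) * l2 x ^ 2 := by nlinarith [sq_nonneg (l2 x)]

namespace HasRIP

variable {A : Matrix (Fin m) (Fin n) ℝ} {δ : ℝ}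

lemma abs_dotProduct_mulVec_self_le (hA : HasRIP A k δ) {x : Fin n → ℝ}
    (hx : (Function.support x).ncard ≤ k) : |x ⬝ᵥ (1 - Aᵀ * A) *ᵥ x| ≤ δ * l2 x ^ 2 := by
  obtain ⟨lower, upper⟩ := hA.2 x hx
  rw [dotProduct_one_sub_transpose_mul_self_mulVec, abs_le]
  constructor <;> linarith

lemma abs_dotProduct_mulVec_le (hA : HasRIP A k δ) {v w : Fin n → ℝ}
    (h : (Function.support v ∪ Function.support w).ncard ≤ k) :
    |v ⬝ᵥ (1 - Aᵀ * A) *ᵥ w| ≤ δ * l2 v * l2 w := by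
  have hT : (toEuclideanCLM (𝕜 := ℝ) (1 - Aᵀ * A) :
      EuclideanSpace ℝ (Fin n) →ₗ[ℝ] EuclideanSpace ℝ (Fin n)).IsSymmetric := by
    rw [coe_toEuclideanCLM_eq_toEuclideanLin, isSymmetric_toEuclideanLin_iff]
    exact isHermitian_one.sub (isHermitian_conjTranspose_mul_self A)
  set V := Submodule.span ℝ {WithLp.toLp 2 v, WithLp.toLp 2 w}
  have hV : ∀ x ∈ V, |⟪toEuclideanCLM (𝕜 := ℝ) (1 - Aᵀ * A) x, x⟫| ≤ δ * ‖x‖ ^ 2 := by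
    intro x hx
    obtain ⟨a, b, rfl⟩ := Submodule.mem_span_pair.1 hx
    have hsupp : Function.support (a • v + b • w) ⊆ Function.support v ∪ Function.support w :=
      (Function.support_add _ _).trans (Set.union_subset_union
        (Function.support_const_smul_subset a v) (Function.support_const_smul_subset b w))
    rw [real_inner_comm, inner_toEuclideanCLM, ← l2_ofLp]
    exact hA.abs_dotProduct_mulVec_self_le ((Set.ncard_le_ncard hsupp (Set.toFinite _)).trans h)
  have := ContinuousLinearMap.abs_inner_le_of_abs_inner_self_le hT V hA.1 hV
    (Submodule.subset_span (Set.mem_insert _ _))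
    (Submodule.subset_span (Set.mem_insert_of_mem _ rfl))
  rwa [inner_toEuclideanCLM, ← l2_ofLp, ← l2_ofLp] at this

end HasRIP

end RestrictedIsometry

lemma le_sInf_mul {S : Set ℝ} (hS : S.Nonempty) {a c : ℝ} (hc : 0 ≤ c) (h : ∀ δ ∈ S, a ≤ δ * c) :
    a ≤ sInf S * c := by
  have := le_csInf (hS.smul_set (a := c)) (by rintro _ ⟨δ, hδ, rfl⟩; simpa [mul_comm] using h δ hδ)
  rwa [Real.sInf_smul_of_nonneg hc, smul_eq_mul, mul_comm] at this

/-- For any `v, w ∈ ℝⁿ` with `|supp v ∪ supp w| ≤ k`,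
`|⟨v, (I - AᵀA)w⟩| ≤ δ_k ‖v‖₂ ‖w‖₂`. -/
theorem stmt2 {m n k : ℕ} (A : Matrix (Fin m) (Fin n) ℝ) (v w : Fin n → ℝ)
    (h : (Function.support v ∪ Function.support w).ncard ≤ k) :
    |∑ i, v i * ((1 - Aᵀ * A) *ᵥ w) i| ≤ RIC A k * l2 v * l2 w := by
  rw [RIC_eq_sInf, mul_assoc]
  refine le_sInf_mul ⟨_, hasRIP_opNorm_sq_add_one A k⟩ (mul_nonneg (l2_nonneg v) (l2_nonneg w))
    fun δ hδ => ?_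
  rw [← mul_assoc]
  exact hδ.abs_dotProduct_mulVec_le h
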